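/- Let G be a graph such that γ_R(G − S) < γ_R(G) for every k-subset S of V(G) (G is Roman domination k-vertex-critical), and let x be a vertex of degree at least k − 1. If S consists of x together with k − 1 of its neighbors, then γ_R(G) − 2 ≤ γ_R(G − S) ≤ γ_R(G) − 1. -/
import Mathlib


def IsRDF {V : Type*} (G : SimpleGraph V) (f : V → ℕ) : Prop :=
  (∀ v, f v ≤ 2) ∧ ∀ v, f v = 0 → ∃ u, G.Adj v u ∧ f u = 2

noncomputable def gammaR {V : Type*} [Fintype V] (G : SimpleGraph V) : ℕ :=
  sInf {w | ∃ f, IsRDF G f ∧ ∑ v, f v = w}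

def IsMinRDF {V : Type*} [Fintype V] (G : SimpleGraph V) (f : V → ℕ) : Prop :=
  IsRDF G f ∧ ∑ v, f v = gammaR G

noncomputable instance myInstSetFintype {V : Type*} [Fintype V] (s : Set V) : Fintype s :=
  s.toFinite.fintype

lemma rdf_set_nonempty {V : Type*} [Fintype V] (G : SimpleGraph V) :
    {w | ∃ f, IsRDF G f ∧ ∑ v, f v = w}.Nonempty :=
  ⟨∑ _v : V, 2, fun _ => 2, ⟨fun _ => le_refl 2, fun v hv => by simp at hv⟩, rfl⟩

lemma gammaR_le {V : Type*} [Fintype V] (G : SimpleGraph V) (f : V → ℕ) (hf : IsRDF G f) :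
    gammaR G ≤ ∑ v, f v :=
  Nat.sInf_le ⟨f, hf, rfl⟩

lemma exists_minRDF {V : Type*} [Fintype V] (G : SimpleGraph V) :
    ∃ f, IsRDF G f ∧ ∑ v, f v = gammaR G :=
  Nat.sInf_mem (rdf_set_nonempty G)

theorem gammaR_kcritical_star_removal {V : Type*} [Fintype V] [DecidableEq V]
    (G : SimpleGraph V) (k : ℕ)
    (hcrit : ∀ S : Finset V, S.card = k → gammaR (G.induce {u | u ∉ S}) < gammaR G)
    (x : V) (hdeg : k - 1 ≤ (G.neighborSet x).ncard)
    (T : Finset V) (hT : ↑T ⊆ G.neighborSet x) (hTcard : T.card = k - 1)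
    (S : Finset V) (hS : S = insert x T) :
    gammaR G - 2 ≤ gammaR (G.induce {u | u ∉ S}) ∧
    gammaR (G.induce {u | u ∉ S}) ≤ gammaR G - 1 := by
  have hxT : x ∉ T := by
    intro hx
    exact G.irrefl (hT hx)
  -- dispose of the degenerate case k = 0
  rcases Nat.eq_zero_or_pos k with hk0 | hkpos
  · exfalso
    have hlt := hcrit ∅ (by simp [hk0])
    obtain ⟨f, hf, hsum⟩ := exists_minRDF (G.induce {u | u ∉ (∅ : Finset V)})
    have hmem : ∀ v : V, v ∈ {u : V | u ∉ (∅ : Finset V)} := by simp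
    set g : V → ℕ := fun v => f ⟨v, hmem v⟩ with hg
    have hgRDF : IsRDF G g := by
      constructor
      · intro v; exact hf.1 _
      · intro v hv
        obtain ⟨u, hu, hu2⟩ := hf.2 ⟨v, hmem v⟩ hv
        exact ⟨u.val, hu, by simpa [hg] using hu2⟩
    have hsg : ∑ v, g v = ∑ u, f u := by
      apply Fintype.sum_equiv (Equiv.subtypeUnivEquiv hmem).symm
      intro v; rfl
    have := gammaR_le G g hgRDF
    rw [hsg, hsum] at this
    omega
  -- main case
  have hScard : S.card = k := by
    rw [hS, Finset.card_insert_of_notMem hxT, hTcard]; omega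
  have hupper := hcrit S hScard
  refine ⟨?_, by omega⟩
  obtain ⟨f, hf, hsum⟩ := exists_minRDF (G.induce {u | u ∉ S})
  classical
  set g : V → ℕ := fun v => if hv : v ∈ S then (if v = x then 2 else 0) else f ⟨v, hv⟩ with hg
  have hxS : x ∈ S := by simp [hS]
  have hgRDF : IsRDF G g := by
    constructor
    · intro v
      by_cases hv : v ∈ S
      · simp only [hg, dif_pos hv]; split <;> omega
      · simp only [hg, dif_neg hv]; exact hf.1 _
    · intro v hv
      by_cases hvS : v ∈ S
      · refine ⟨x, ?_, by simp [hg, hxS]⟩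
        simp only [hg, dif_pos hvS] at hv
        have hvx : v ≠ x := by intro h; rw [if_pos h] at hv; omega
        have hvT : v ∈ T := by
          rw [hS] at hvS; rcases Finset.mem_insert.mp hvS with h | h
          · exact absurd h hvx
          · exact h
        exact (hT hvT).symm
      · simp only [hg, dif_neg hvS] at hv
        obtain ⟨u, hu, hu2⟩ := hf.2 ⟨v, hvS⟩ hv
        refine ⟨u.val, hu, ?_⟩
        have huS : u.val ∉ S := u.2
        simp only [hg, dif_neg huS]
        simpa using hu2
  have hsg : ∑ v, g v = (∑ u, f u) + 2 := by
    rw [← Finset.sum_add_sum_compl S g]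
    have h1 : ∑ v ∈ S, g v = 2 := by
      rw [hS, Finset.sum_insert hxT]
      have : ∑ v ∈ T, g v = 0 := by
        apply Finset.sum_eq_zero
        intro v hv
        have hvS : v ∈ S := by rw [hS]; exact Finset.mem_insert_of_mem hv
        have hvx : v ≠ x := fun h => hxT (h ▸ hv)
        simp [hg, dif_pos hvS, hvx]
      rw [this]
      simp [hg, hxS]
    have h2 : ∑ v ∈ Sᶜ, g v = ∑ u, f u := by
      rw [Finset.sum_subtype Sᶜ (fun a => Finset.mem_compl) g]
      apply Finset.sum_congr rfl
      intro a _
      have haS : a.val ∉ S := a.2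
      simp only [hg, dif_neg haS]
      congr
    rw [h1, h2]; omega
  have := gammaR_le G g hgRDF
  rw [hsg, hsum] at this
  omega
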